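/- Let G : ℂⁿ → ℝ be continuous, positive, convex, complex homogeneous, and strictly convex, and let F(ξ) = sup{Re(η(ξ)) : η ∈ ℂⁿ, G(η) = 1} be the dual norm. Let ξ, h ∈ ℂⁿ with F(ξ) = 1. Then the function f : ℝ → ℝ, f(t) = F(ξ + t·h), is differentiable at t = 0 and f'(0) = Re(η₀(h)), where η₀ is the unique vector with G(η₀) = 1 and F(ξ) = Re(η₀(ξ)). -/

import Mathlib

open Complex Filter Asymptotics Topology

noncomputable section

/-- The ℂ-bilinear pairing `η(ξ) = ∑ i, η i * ξ i` on `ℂⁿ`. -/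
def cpair {n : ℕ} (η ξ : Fin n → ℂ) : ℂ := ∑ i, η i * ξ i

/-- `G` is positive: `G η > 0` for every `η ≠ 0`. -/
def IsPositiveFn {n : ℕ} (G : (Fin n → ℂ) → ℝ) : Prop :=
  ∀ η : Fin n → ℂ, η ≠ 0 → 0 < G η

/-- `G` is complex homogeneous: `G (α • η) = |α| * G η`. -/
def IsComplexHomogeneous {n : ℕ} (G : (Fin n → ℂ) → ℝ) : Prop :=
  ∀ (α : ℂ) (η : Fin n → ℂ), G (α • η) = ‖α‖ * G η

/-- `G` is convex (subadditive): `G (η₁ + η₂) ≤ G η₁ + G η₂`. -/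
def IsConvexFn {n : ℕ} (G : (Fin n → ℂ) → ℝ) : Prop :=
  ∀ η₁ η₂ : Fin n → ℂ, G (η₁ + η₂) ≤ G η₁ + G η₂

/-- `G` is strictly convex: it is convex and `G (η₁ + η₂) < 2` whenever
`G η₁ = G η₂ = 1` and `η₁ ≠ η₂`. -/
def IsStrictlyConvexFn {n : ℕ} (G : (Fin n → ℂ) → ℝ) : Prop :=
  IsConvexFn G ∧
    ∀ η₁ η₂ : Fin n → ℂ, G η₁ = 1 → G η₂ = 1 → η₁ ≠ η₂ → G (η₁ + η₂) < 2

/-- The dual norm `F ξ = sup {Re (η(ξ)) : G η = 1}`. -/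
def dualNorm {n : ℕ} (G : (Fin n → ℂ) → ℝ) (ξ : Fin n → ℂ) : ℝ :=
  sSup {r : ℝ | ∃ η : Fin n → ℂ, G η = 1 ∧ r = (cpair η ξ).re}

/-- The dual metric `F (x, ξ) = sup {Re (η(ξ)) : G (x, η) = 1}` of a parametrized
family `G : U × ℂⁿ → ℝ`. -/
def dualMetric {m n : ℕ} (G : (Fin m → ℂ) × (Fin n → ℂ) → ℝ)
    (x : Fin m → ℂ) (ξ : Fin n → ℂ) : ℝ :=
  dualNorm (fun η => G (x, η)) ξ

end

/-! The dual norm is `F ζ = max_{η ∈ S} Re η(ζ)` over the compact "sphere" `S = {G = 1}`, so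
`t ↦ F (ξ + t h)` is the upper envelope of the affine functions `t ↦ Re η(ξ) + t Re η(h)`.
Strict convexity of `G` makes `η₀` the unique maximizer of `Re η(ξ)` on `S`. Danskin's argument
then applies: `F (ξ + t h) - 1 - t Re η₀(h)` lies between `0` and
`t (Re η_t(h) - Re η₀(h))`, where `η_t` is a maximizer at time `t`, and compactness forces
`η_t → η₀`. -/

open Set

section Danskin

variable {X : Type*} [TopologicalSpace X] {S : Set X} {a b : X → ℝ} {x₀ : X}

theorem IsCompact.principal_inf_comap_le_nhds_of_unique_max (hS : IsCompact S)
    (ha : ContinuousOn a S) (huniq : ∀ x ∈ S, x ≠ x₀ → a x < a x₀) :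
    𝓟 S ⊓ comap a (𝓝 (a x₀)) ≤ 𝓝 x₀ := by
  intro V hV
  obtain ⟨U, hUV, hU, hx₀U⟩ := mem_nhds_iff.1 hV
  rcases (S \ U).eq_empty_or_nonempty with hK | hK
  · exact mem_inf_of_left (mem_principal.2 ((sdiff_eq_empty.1 hK).trans hUV))
  obtain ⟨x₁, hx₁, hx₁max⟩ := (hS.diff hU).exists_isMaxOn hK (ha.mono sdiff_subset)
  have hlt : a x₁ < a x₀ := huniq x₁ hx₁.1 fun h => hx₁.2 (h ▸ hx₀U)
  refine mem_inf_of_inter (mem_principal_self S) (preimage_mem_comap (Ioi_mem_nhds hlt)) ?_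
  rintro x ⟨hxS, hx : a x₁ < a x⟩
  by_contra hxV
  exact (hx₁max ⟨hxS, fun hxU => hxV (hUV hxU)⟩).not_gt hx

theorem IsCompact.tendsto_of_isMaxOn_add_mul (hS : IsCompact S) (ha : ContinuousOn a S)
    (hb : ContinuousOn b S) (hx₀ : x₀ ∈ S) (huniq : ∀ x ∈ S, x ≠ x₀ → a x < a x₀)
    {x : ℝ → X} (hxS : ∀ t, x t ∈ S)
    (hxmax : ∀ t, IsMaxOn (fun y => a y + t * b y) S (x t)) :
    Tendsto x (𝓝 0) (𝓝[S] x₀) := by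
  obtain ⟨C, hC⟩ := hS.exists_bound_of_continuousOn hb
  have hlower : ∀ t, a x₀ - |t| * (2 * C) ≤ a (x t) := fun t => by
    have hbt := hC _ (hxS t)
    have hb₀ := hC _ hx₀
    rw [Real.norm_eq_abs] at hbt hb₀
    have : t * (b (x t) - b x₀) ≤ |t| * (2 * C) :=
      (le_abs_self _).trans (by rw [abs_mul]; gcongr; linarith [abs_sub (b (x t)) (b x₀)])
    have hmax : a x₀ + t * b x₀ ≤ a (x t) + t * b (x t) := hxmax t hx₀
    linarith
  have hupper : ∀ t, a (x t) ≤ a x₀ := fun t => by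
    rcases eq_or_ne (x t) x₀ with h | h
    · rw [h]
    · exact (huniq _ (hxS t) h).le
  have hax : Tendsto (a ∘ x) (𝓝 0) (𝓝 (a x₀)) := by
    refine tendsto_of_tendsto_of_tendsto_of_le_of_le ?_ tendsto_const_nhds hlower hupper
    simpa using (tendsto_const_nhds (x := a x₀)).sub
      ((continuous_abs.tendsto (0 : ℝ)).mul_const (2 * C))
  have hx : Tendsto x (𝓝 0) (𝓟 S ⊓ comap a (𝓝 (a x₀))) :=
    tendsto_inf.2 ⟨tendsto_principal.2 (.of_forall hxS), tendsto_comap_iff.2 hax⟩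
  exact tendsto_nhdsWithin_iff.2
    ⟨hx.mono_right (hS.principal_inf_comap_le_nhds_of_unique_max ha huniq), .of_forall hxS⟩

theorem hasDerivAt_sSup_image_add_mul (hS : IsCompact S) (ha : ContinuousOn a S)
    (hb : ContinuousOn b S) (hx₀ : x₀ ∈ S)
    (huniq : ∀ x ∈ S, x ≠ x₀ → a x < a x₀) :
    HasDerivAt (fun t : ℝ => sSup ((fun x => a x + t * b x) '' S)) (b x₀) 0 := by
  set f := fun t : ℝ => sSup ((fun x => a x + t * b x) '' S)
  choose x hxS hxmax using fun t : ℝ => hS.exists_isMaxOn ⟨x₀, hx₀⟩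
    (ha.add (continuousOn_const.mul hb) : ContinuousOn (fun x => a x + t * b x) S)
  have hf : ∀ t, f t = a (x t) + t * b (x t) := fun t =>
    ((hxmax t).isLUB (hxS t)).csSup_eq ⟨_, mem_image_of_mem _ (hxS t)⟩
  have hlower : ∀ t, a x₀ + t * b x₀ ≤ f t := fun t => hf t ▸ hxmax t hx₀
  have hupper : ∀ t, f t ≤ a x₀ + t * b (x t) := fun t => by
    rcases eq_or_ne (x t) x₀ with h | h
    · rw [hf, h]
    · linarith [hf t, huniq _ (hxS t) h]
  have hf0 : f 0 = a x₀ := le_antisymm (by simpa using hupper 0) (by simpa using hlower 0)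
  have hx := hS.tendsto_of_isMaxOn_add_mul ha hb hx₀ huniq hxS hxmax
  have hbx : Tendsto (fun t => |b (x t) - b x₀|) (𝓝[≠] 0) (𝓝 0) := by
    simpa [Real.norm_eq_abs] using tendsto_iff_norm_sub_tendsto_zero.1
      (((hb x₀ hx₀).tendsto.comp hx).mono_left nhdsWithin_le_nhds)
  rw [hasDerivAt_iff_tendsto_slope, tendsto_iff_norm_sub_tendsto_zero]
  refine squeeze_zero' (.of_forall fun _ => norm_nonneg _) ?_ hbx
  filter_upwards [self_mem_nhdsWithin] with t (ht : t ≠ 0)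
  have hslope : slope f 0 t - b x₀ = (f t - a x₀ - t * b x₀) / t := by
    rw [slope_def_field, hf0]; field_simp; ring
  rw [Real.norm_eq_abs, hslope, abs_div, div_le_iff₀ (abs_pos.2 ht),
    abs_of_nonneg (by linarith [hlower t])]
  calc f t - a x₀ - t * b x₀ ≤ t * (b (x t) - b x₀) := by linarith [hupper t]
    _ ≤ |b (x t) - b x₀| * |t| := by rw [mul_comm, ← abs_mul]; exact le_abs_self _

end Danskin

section DualNorm

variable {n : ℕ} {G : (Fin n → ℂ) → ℝ}

theorem cpair_eq_dotProduct (η ξ : Fin n → ℂ) : cpair η ξ = η ⬝ᵥ ξ := rfl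

theorem cpair_add_left (η₁ η₂ ξ : Fin n → ℂ) :
    cpair (η₁ + η₂) ξ = cpair η₁ ξ + cpair η₂ ξ :=
  add_dotProduct η₁ η₂ ξ

theorem re_cpair_add_smul_right (η ξ h : Fin n → ℂ) (t : ℝ) :
    (cpair η (ξ + t • h)).re = (cpair η ξ).re + t * (cpair η h).re := by
  simp [cpair_eq_dotProduct, dotProduct_add, dotProduct_smul, Complex.real_smul]

theorem continuous_re_cpair_left (ξ : Fin n → ℂ) :
    Continuous fun η : Fin n → ℂ => (cpair η ξ).re :=
  Complex.continuous_re.comp (continuous_id.dotProduct continuous_const)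

theorem IsComplexHomogeneous.map_zero (hGhom : IsComplexHomogeneous G) : G 0 = 0 := by
  simpa using hGhom 0 0

theorem IsComplexHomogeneous.map_ofReal_inv_smul (hGhom : IsComplexHomogeneous G) {r : ℝ}
    (hr : 0 < r) (η : Fin n → ℂ) : G (((r : ℂ))⁻¹ • η) = r⁻¹ * G η := by
  rw [hGhom, norm_inv, Complex.norm_of_nonneg hr.le]

theorem IsComplexHomogeneous.exists_pos_mul_norm_le (hGhom : IsComplexHomogeneous G)
    (hGcont : Continuous G) (hGpos : IsPositiveFn G) :
    ∃ c > 0, ∀ η, c * ‖η‖ ≤ G η := by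
  cases subsingleton_or_nontrivial (Fin n → ℂ)
  · exact ⟨1, one_pos, fun η => by simp [Subsingleton.elim η 0, hGhom.map_zero]⟩
  obtain ⟨u, hu, humin⟩ := (isCompact_sphere (0 : Fin n → ℂ) 1).exists_isMinOn
    (NormedSpace.sphere_nonempty.2 zero_le_one) hGcont.continuousOn
  refine ⟨G u, hGpos u (ne_zero_of_mem_unit_sphere ⟨u, hu⟩), fun η => ?_⟩
  rcases eq_or_ne η 0 with rfl | hη
  · simp [hGhom.map_zero]
  have hnorm := norm_pos_iff.2 hη
  have hv : ((‖η‖ : ℂ))⁻¹ • η ∈ Metric.sphere (0 : Fin n → ℂ) 1 := by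
    simpa using norm_smul_inv_norm (𝕜 := ℂ) hη
  have := humin hv
  rw [mem_ofPred_eq, hGhom.map_ofReal_inv_smul hnorm, inv_mul_eq_div, le_div_iff₀ hnorm] at this
  linarith

theorem IsComplexHomogeneous.isCompact_setOf_eq_one (hGhom : IsComplexHomogeneous G)
    (hGcont : Continuous G) (hGpos : IsPositiveFn G) : IsCompact {η | G η = 1} := by
  obtain ⟨c, hc, hcG⟩ := hGhom.exists_pos_mul_norm_le hGcont hGpos
  refine Metric.isCompact_of_isClosed_isBounded (isClosed_eq hGcont continuous_const)
    (Metric.isBounded_closedBall (x := 0) (r := c⁻¹) |>.subset fun η (hη : G η = 1) => ?_)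
  rw [mem_closedBall_zero_iff, ← one_div, le_div_iff₀ hc]
  linarith [hcG η]

theorem dualNorm_eq_sSup_image (ξ : Fin n → ℂ) :
    dualNorm G ξ = sSup ((fun η => (cpair η ξ).re) '' {η | G η = 1}) := by
  simp only [dualNorm, image, mem_ofPred_eq, eq_comm]

theorem re_cpair_le_mul_dualNorm (hGcont : Continuous G) (hGpos : IsPositiveFn G)
    (hGhom : IsComplexHomogeneous G) (η ξ : Fin n → ℂ) :
    (cpair η ξ).re ≤ G η * dualNorm G ξ := by
  rcases eq_or_ne η 0 with rfl | hη
  · simp [cpair, hGhom.map_zero]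
  have hGη := hGpos η hη
  have hu : G (((G η : ℂ))⁻¹ • η) = 1 := by
    rw [hGhom.map_ofReal_inv_smul hGη, inv_mul_cancel₀ hGη.ne']
  have := le_csSup (((hGhom.isCompact_setOf_eq_one hGcont hGpos).image
    (continuous_re_cpair_left ξ)).bddAbove) (mem_image_of_mem _ hu)
  rw [← dualNorm_eq_sSup_image, cpair_eq_dotProduct, smul_dotProduct, smul_eq_mul,
    ← Complex.ofReal_inv, Complex.re_ofReal_mul, inv_mul_le_iff₀ hGη] at this
  exact this

end DualNorm

theorem royden_dual_norm_directional_derivative_general {n : ℕ} (G : (Fin n → ℂ) → ℝ)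
    (hGcont : Continuous G) (hGpos : IsPositiveFn G)
    (hGhom : IsComplexHomogeneous G) (hGsc : IsStrictlyConvexFn G)
    (ξ h : Fin n → ℂ) (hξ : dualNorm G ξ = 1)
    (η₀ : Fin n → ℂ) (hη₀ : G η₀ = 1) (hsupp : dualNorm G ξ = (cpair η₀ ξ).re) :
    HasDerivAt (fun t : ℝ => dualNorm G (ξ + t • h)) ((cpair η₀ h).re) 0 := by
  set S := {η | G η = 1}
  have hmax : ∀ η ∈ S, η ≠ η₀ → (cpair η ξ).re < (cpair η₀ ξ).re := by
    intro η (hη : G η = 1) hne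
    have hsum := re_cpair_le_mul_dualNorm hGcont hGpos hGhom (η + η₀) ξ
    rw [cpair_add_left, Complex.add_re, hξ, mul_one] at hsum
    linarith [hGsc.2 η η₀ hη hη₀ hne]
  have hF : (fun t : ℝ => dualNorm G (ξ + t • h)) =
      fun t : ℝ => sSup ((fun η => (cpair η ξ).re + t * (cpair η h).re) '' S) := by
    funext t
    simp only [S, dualNorm_eq_sSup_image, re_cpair_add_smul_right]
  rw [hF]
  exact hasDerivAt_sSup_image_add_mul (hGhom.isCompact_setOf_eq_one hGcont hGpos)
    (continuous_re_cpair_left ξ).continuousOn (continuous_re_cpair_left h).continuousOn hη₀ hmax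

/-- **Directional differentiability of the dual norm (Claim 2 (4) in the proof of
Royden's criterion).**  If `G : ℂⁿ → ℝ` is continuous, positive, convex, complex
homogeneous and strictly convex, `F` its dual norm, and `ξ, h ∈ ℂⁿ` with `F ξ = 1`, then
`t ↦ F (ξ + t·h)` is differentiable at `t = 0` with derivative `Re (η₀(h))`, where `η₀`
is the (unique) vector with `G η₀ = 1` and `F ξ = Re (η₀(ξ))`. -/
theorem royden_dual_norm_directional_derivative {n : ℕ} (G : (Fin n → ℂ) → ℝ)
    (hGcont : Continuous G) (hGpos : IsPositiveFn G) (hGconv : IsConvexFn G)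
    (hGhom : IsComplexHomogeneous G) (hGsc : IsStrictlyConvexFn G)
    (ξ h : Fin n → ℂ) (hξ : dualNorm G ξ = 1)
    (η₀ : Fin n → ℂ) (hη₀ : G η₀ = 1) (hsupp : dualNorm G ξ = (cpair η₀ ξ).re) :
    HasDerivAt (fun t : ℝ => dualNorm G (ξ + t • h)) ((cpair η₀ h).re) 0 :=
  royden_dual_norm_directional_derivative_general G hGcont hGpos hGhom hGsc ξ h hξ η₀ hη₀ hsupp
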